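/- Let A be an epsilon-strongly G-graded ring, R = A_1, and let e_1, …, e_n be pairwise orthogonal primitive idempotents of R such that Re_i and Re_j are non-isomorphic as left R-modules whenever i ≠ j. Let X be a nonempty subset of {e_1, …, e_n}. Then G_X := {g ∈ G : for every e ∈ X there exists f ∈ X with A_g e ≅ Rf as left R-modules} is a subgroup of G; here A_g e = {a e : a ∈ A_g}, a left R-submodule of A. -/

import Mathlib

set_option synthInstance.maxHeartbeats 1000000
set_option maxHeartbeats 1000000


/-- A `G`-grading on a unital ring `A`: a family of additive subgroups with
`A_g A_h ⊆ A_{gh}`, `1 ∈ A₁`, whose internal direct sum is `A`. -/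
structure RingGrading (G : Type*) [Group G] [DecidableEq G]
    (A : Type*) [Ring A] where
  comp : G → AddSubgroup A
  one_mem : (1 : A) ∈ comp 1
  mul_mem : ∀ ⦃g h : G⦄ ⦃a b : A⦄, a ∈ comp g → b ∈ comp h → a * b ∈ comp (g * h)
  isInternal : DirectSum.IsInternal comp

variable {G : Type*} [Group G] [DecidableEq G] {A : Type*} [Ring A]

/-- The additive subgroup `S T` generated by products of elements of `S` and `T`. -/
def sgMul (S T : AddSubgroup A) : AddSubgroup A :=
  AddSubgroup.closure {x : A | ∃ s ∈ S, ∃ t ∈ T, x = s * t}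

/-- `ε` is a family of epsilon-elements for the grading `𝒜`:
`ε_g ∈ A_g A_{g⁻¹}` and `ε_g a = a = a ε_{g⁻¹}` for all `a ∈ A_g`. -/
structure IsEpsilonFamily (𝒜 : RingGrading G A) (ε : G → A) : Prop where
  mem : ∀ g : G, ε g ∈ sgMul (𝒜.comp g) (𝒜.comp g⁻¹)
  mul_left : ∀ g : G, ∀ a ∈ 𝒜.comp g, ε g * a = a
  mul_right : ∀ g : G, ∀ a ∈ 𝒜.comp g, a * ε g⁻¹ = a

/-- `𝒜` is an epsilon-strongly graded ring. -/
def IsEpsilonStrong (𝒜 : RingGrading G A) : Prop :=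
  ∃ ε : G → A, IsEpsilonFamily 𝒜 ε

/-- The base ring `R = A₁` as a subring of `A`. -/
def RingGrading.base (𝒜 : RingGrading G A) : Subring A where
  carrier := 𝒜.comp 1
  zero_mem' := zero_mem _
  one_mem' := 𝒜.one_mem
  add_mem' := fun ha hb => add_mem ha hb
  neg_mem' := fun ha => neg_mem ha
  mul_mem' := fun ha hb => by simpa using 𝒜.mul_mem ha hb

/-- `A_g x = {a x : a ∈ A_g}` as a left `R`-submodule of `A`, where `R = A₁`.
In particular `compMul 𝒜 1 x = R x`. -/
def RingGrading.compMul (𝒜 : RingGrading G A) (g : G) (x : A) :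
    Submodule ↥𝒜.base A where
  carrier := {y : A | ∃ a ∈ 𝒜.comp g, y = a * x}
  zero_mem' := ⟨0, zero_mem _, (zero_mul x).symm⟩
  add_mem' := by
    rintro a b ⟨r, hr, rfl⟩ ⟨s, hs, rfl⟩
    exact ⟨r + s, add_mem hr hs, (add_mul r s x).symm⟩
  smul_mem' := by
    rintro c y ⟨r, hr, rfl⟩
    exact ⟨(c : A) * r, by simpa using 𝒜.mul_mem c.2 hr, (mul_assoc (c : A) r x).symm⟩

/-- A primitive idempotent of a ring: a nonzero idempotent which is not the sum of
two nonzero orthogonal idempotents. -/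
def IsPrimitiveIdempotent {S : Type*} [Ring S] (e : S) : Prop :=
  IsIdempotentElem e ∧ e ≠ 0 ∧
    ¬∃ a b : S, IsIdempotentElem a ∧ IsIdempotentElem b ∧ a ≠ 0 ∧ b ≠ 0 ∧
      a * b = 0 ∧ b * a = 0 ∧ e = a + b


section Auxiliary

variable {G : Type*} [Group G] [DecidableEq G] {A : Type*} [Ring A]

namespace RingGrading

variable (𝒜 : RingGrading G A)

lemma sgMul_le (g h : G) : sgMul (𝒜.comp g) (𝒜.comp h) ≤ 𝒜.comp (g * h) := by
  apply (AddSubgroup.closure_le _).mpr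
  rintro x ⟨s, hs, t, ht, rfl⟩
  exact 𝒜.mul_mem hs ht

lemma mem_compMul {g : G} {x y : A} :
    y ∈ 𝒜.compMul g x ↔ ∃ a ∈ 𝒜.comp g, y = a * x := Iff.rfl

lemma base_coe_mem (E : ↥𝒜.base) : (E : A) ∈ 𝒜.comp 1 := E.2

variable {𝒜} {ε : G → A} (hε : IsEpsilonFamily 𝒜 ε)

include hε

lemma eps_mem_one (g : G) : ε g ∈ 𝒜.comp 1 := by
  have := 𝒜.sgMul_le g g⁻¹ (hε.mem g)
  simpa using this

lemma eps_mul_right' {g : G} {a : A} (ha : a ∈ 𝒜.comp g⁻¹) : a * ε g = a := by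
  have := hε.mul_right g⁻¹ a ha
  rwa [inv_inv] at this

lemma eps_idem (g : G) : ε g * ε g = ε g := by
  have key : ∀ z, z ∈ sgMul (𝒜.comp g) (𝒜.comp g⁻¹) → ε g * z = z := by
    intro z hz
    induction hz using AddSubgroup.closure_induction with
    | mem x hx =>
        obtain ⟨s, hs, t, ht, rfl⟩ := hx
        rw [← mul_assoc, hε.mul_left g s hs]
    | zero => simp
    | add x y _ _ ihx ihy => rw [mul_add, ihx, ihy]
    | neg x _ ihx => rw [mul_neg, ihx]
  exact key _ (hε.mem g)

lemma eps_comm {g : G} {c : A} (hc : c ∈ 𝒜.comp 1) : ε g * c = c * ε g := by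
  have key1 : ∀ z, z ∈ sgMul (𝒜.comp g) (𝒜.comp g⁻¹) → z * c * ε g = z * c := by
    intro z hz
    induction hz using AddSubgroup.closure_induction with
    | mem x hx =>
        obtain ⟨s, hs, t, ht, rfl⟩ := hx
        have htc : t * c ∈ 𝒜.comp g⁻¹ := by simpa using 𝒜.mul_mem ht hc
        rw [mul_assoc s t c, mul_assoc, eps_mul_right' hε htc]
    | zero => simp
    | add x y _ _ ihx ihy => rw [add_mul, add_mul, ihx, ihy]
    | neg x _ ihx => simp only [neg_mul]; rw [ihx]
  have key2 : ∀ z, z ∈ sgMul (𝒜.comp g) (𝒜.comp g⁻¹) → ε g * (c * z) = c * z := by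
    intro z hz
    induction hz using AddSubgroup.closure_induction with
    | mem x hx =>
        obtain ⟨s, hs, t, ht, rfl⟩ := hx
        have hcs : c * s ∈ 𝒜.comp g := by simpa using 𝒜.mul_mem hc hs
        rw [← mul_assoc c s t, ← mul_assoc, hε.mul_left g _ hcs]
    | zero => simp
    | add x y _ _ ihx ihy => rw [mul_add, mul_add, ihx, ihy]
    | neg x _ ihx => rw [mul_neg, mul_neg, ihx]
  have h1 : ε g * c * ε g = ε g * c := key1 _ (hε.mem g)
  have h2 : ε g * (c * ε g) = c * ε g := key2 _ (hε.mem g)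
  rw [← h2, ← mul_assoc, h1]

/-- Core lemma: from an isomorphism `A_g E ≅ R F` (with `E` primitive, `F` a nonzero
idempotent) extract elements `x ∈ A_g`, `u ∈ A_{g⁻¹}` with `u x = E`, `x u = F`. -/
lemma core (g : G) (E F : ↥𝒜.base) (hE : IsPrimitiveIdempotent E)
    (hFidem : IsIdempotentElem F) (hF0 : F ≠ 0)
    (ψ : ↥(𝒜.compMul g (E : A)) ≃ₗ[↥𝒜.base] ↥(𝒜.compMul 1 (F : A))) :
    ∃ x u : A, x ∈ 𝒜.comp g ∧ x * E = x ∧ u ∈ 𝒜.comp g⁻¹ ∧ u * F = u ∧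
      u * x = (E : A) ∧ x * u = (F : A) := by
  have hEidem : (E : A) * (E : A) = (E : A) := by exact_mod_cast congrArg Subtype.val hE.1
  have hFidemA : (F : A) * (F : A) = (F : A) := by
    exact_mod_cast congrArg Subtype.val hFidem
  have hFmem : (F : A) ∈ 𝒜.compMul 1 (F : A) := ⟨1, 𝒜.one_mem, (one_mul _).symm⟩
  set FF : ↥(𝒜.compMul 1 (F : A)) := ⟨(F : A), hFmem⟩ with hFF
  set x' : ↥(𝒜.compMul g (E : A)) := ψ.symm FF with hx'
  set x : A := (x' : A) with hxdef
  obtain ⟨a, ha, hxa⟩ := x'.2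
  have hxmem : x ∈ 𝒜.comp g := by
    rw [hxdef, hxa]
    have : a * (E : A) ∈ 𝒜.comp (g * 1) := 𝒜.mul_mem ha (𝒜.base_coe_mem E)
    simpa using this
  have hxE : x * E = x := by
    rw [hxdef, hxa, mul_assoc, hEidem]
  -- F • x' = x', hence F * x = x
  have hFx : (F : A) * x = x := by
    have h1 : (F • FF : ↥(𝒜.compMul 1 (F : A))) = FF := by
      apply Subtype.ext
      show (F : A) * (F : A) = (F : A)
      exact hFidemA
    have h2 : F • x' = x' := by
      rw [hx', ← map_smul, h1]
    exact congrArg Subtype.val h2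
  -- Step: ε_{g⁻¹} E = E
  have hcomm : ε g⁻¹ * (E : A) = (E : A) * ε g⁻¹ := eps_comm hε (𝒜.base_coe_mem E)
  have hεidem : ε g⁻¹ * ε g⁻¹ = ε g⁻¹ := eps_idem hε g⁻¹
  have hceE : ε g⁻¹ * (E : A) = (E : A) := by
    set c : A := ε g⁻¹ with hc
    -- if c * E = 0 then A_g E = 0
    have hne : c * (E : A) ≠ 0 := by
      intro h0
      have hzero : ∀ z : ↥(𝒜.compMul g (E : A)), z = 0 := by
        rintro ⟨z, b, hb, rfl⟩
        apply Subtype.ext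
        show b * (E : A) = 0
        have hbe : b * ε g⁻¹ = b := hε.mul_right g b hb
        calc b * (E : A) = b * ε g⁻¹ * (E : A) := by rw [hbe]
          _ = b * (c * (E : A)) := by rw [mul_assoc]
          _ = 0 := by rw [h0, mul_zero]
      have : FF = 0 := by
        rw [hFF]
        calc (⟨(F : A), hFmem⟩ : ↥(𝒜.compMul 1 (F : A))) = ψ x' := by
              rw [hx', ψ.apply_symm_apply]
          _ = ψ 0 := by rw [hzero x']
          _ = 0 := map_zero ψ
      apply hF0
      apply Subtype.ext
      simpa [hFF] using congrArg Subtype.val this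
    by_contra hneq
    -- decompose E = cE + (E - cE) in the subring
    have hcmem : c ∈ 𝒜.comp 1 := eps_mem_one hε g⁻¹
    set E' : ↥𝒜.base := ⟨c, hcmem⟩ * E with hE'
    have haa : (E' : A) = c * (E : A) := rfl
    apply hE.2.2
    refine ⟨E', E - E', ?_, ?_, ?_, ?_, ?_, ?_, by abel⟩
    · -- E' idempotent
      apply Subtype.ext
      show c * (E : A) * (c * (E : A)) = c * (E : A)
      calc c * (E : A) * (c * (E : A)) = c * ((E : A) * c) * (E : A) := by
            rw [mul_assoc, mul_assoc, mul_assoc]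
        _ = c * (c * (E : A)) * (E : A) := by rw [← hcomm]
        _ = c * c * ((E : A) * (E : A)) := by rw [mul_assoc, mul_assoc, mul_assoc]
        _ = c * (E : A) := by rw [hεidem, hEidem]
    · -- E - E' idempotent
      apply Subtype.ext
      show ((E : A) - c * (E : A)) * ((E : A) - c * (E : A)) = (E : A) - c * (E : A)
      have h1 : (E : A) * (c * (E : A)) = c * (E : A) := by
        rw [← mul_assoc, ← hcomm, mul_assoc, hEidem]
      have h2 : c * (E : A) * (E : A) = c * (E : A) := by rw [mul_assoc, hEidem]
      have h3 : c * (E : A) * (c * (E : A)) = c * (E : A) := by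
        calc c * (E : A) * (c * (E : A)) = c * ((E : A) * (c * (E : A))) := by
              rw [mul_assoc]
          _ = c * (c * (E : A)) := by rw [h1]
          _ = c * c * (E : A) := by rw [mul_assoc]
          _ = c * (E : A) := by rw [hεidem]
      rw [sub_mul, mul_sub, mul_sub, hEidem, h1, h2, h3]
      abel
    · -- E' ≠ 0
      intro h0
      apply hne
      have := congrArg Subtype.val h0
      simpa [haa] using this
    · -- E - E' ≠ 0
      intro h0
      apply hneq
      have : E = E' := by
        exact sub_eq_zero.mp h0
      have := congrArg Subtype.val this
      rw [haa] at this
      exact this.symm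
    · -- E' * (E - E') = 0
      apply Subtype.ext
      show c * (E : A) * ((E : A) - c * (E : A)) = 0
      have h1 : c * (E : A) * (E : A) = c * (E : A) := by rw [mul_assoc, hEidem]
      have h3 : c * (E : A) * (c * (E : A)) = c * (E : A) := by
        calc c * (E : A) * (c * (E : A)) = c * ((E : A) * c * (E : A)) := by
              rw [mul_assoc, mul_assoc]
          _ = c * (c * (E : A) * (E : A)) := by rw [← hcomm]
          _ = c * (c * (E : A)) := by rw [mul_assoc, hEidem]
          _ = c * c * (E : A) := by rw [mul_assoc]
          _ = c * (E : A) := by rw [hεidem]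
      rw [mul_sub, h1, h3, sub_self]
    · -- (E - E') * E' = 0
      apply Subtype.ext
      show ((E : A) - c * (E : A)) * (c * (E : A)) = 0
      have h1 : (E : A) * (c * (E : A)) = c * (E : A) := by
        rw [← mul_assoc, ← hcomm, mul_assoc, hEidem]
      have h3 : c * (E : A) * (c * (E : A)) = c * (E : A) := by
        calc c * (E : A) * (c * (E : A)) = c * ((E : A) * (c * (E : A))) := by
              rw [mul_assoc]
          _ = c * (c * (E : A)) := by rw [h1]
          _ = c * c * (E : A) := by rw [mul_assoc]
          _ = c * (E : A) := by rw [hεidem]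
      rw [sub_mul, h1, h3, sub_self]
  -- u existence
  have hu : ∃ u : A, u ∈ 𝒜.comp g⁻¹ ∧ u * F = u ∧ u * x = (E : A) := by
    have key : ∀ z, z ∈ sgMul (𝒜.comp g⁻¹) (𝒜.comp (g⁻¹)⁻¹) →
        ∃ u : A, u ∈ 𝒜.comp g⁻¹ ∧ u * F = u ∧ u * x = z * (E : A) := by
      intro z hz
      induction hz using AddSubgroup.closure_induction with
      | mem w hw =>
          obtain ⟨s, hs, t, ht, rfl⟩ := hw
          rw [inv_inv] at ht
          have htE : t * (E : A) ∈ 𝒜.compMul g (E : A) := ⟨t, ht, rfl⟩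
          obtain ⟨r, hr, hwval⟩ := (ψ ⟨t * (E : A), htE⟩).2
          have hweq : ψ (⟨t * (E : A), htE⟩ : ↥(𝒜.compMul g (E : A)))
              = (⟨r, hr⟩ : ↥𝒜.base) • FF := by
            apply Subtype.ext
            show (ψ ⟨t * (E : A), htE⟩ : A) = r * (F : A)
            exact hwval
          have htx : t * (E : A) = r * x := by
            have := congrArg (fun y => (ψ.symm y : A)) hweq
            simp only [ψ.symm_apply_apply, map_smul] at this
            exact this
          refine ⟨s * r * (F : A), ?_, ?_, ?_⟩
          · have h1 : s * r ∈ 𝒜.comp (g⁻¹ * 1) := 𝒜.mul_mem hs hr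
            have h2 : s * r * (F : A) ∈ 𝒜.comp (g⁻¹ * 1 * 1) :=
              𝒜.mul_mem h1 (𝒜.base_coe_mem F)
            simpa using h2
          · rw [mul_assoc (s * r), hFidemA]
          · calc s * r * (F : A) * x = s * r * ((F : A) * x) := by
                  rw [mul_assoc, mul_assoc]
              _ = s * r * x := by rw [hFx]
              _ = s * (r * x) := by rw [mul_assoc]
              _ = s * (t * (E : A)) := by rw [htx]
              _ = s * t * (E : A) := by rw [mul_assoc]
      | zero => exact ⟨0, zero_mem _, by rw [zero_mul], by rw [zero_mul, zero_mul]⟩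
      | add w₁ w₂ _ _ ih₁ ih₂ =>
          obtain ⟨u₁, hu₁, hu₁F, hu₁x⟩ := ih₁
          obtain ⟨u₂, hu₂, hu₂F, hu₂x⟩ := ih₂
          exact ⟨u₁ + u₂, add_mem hu₁ hu₂, by rw [add_mul, hu₁F, hu₂F],
            by rw [add_mul, hu₁x, hu₂x, add_mul]⟩
      | neg w _ ih =>
          obtain ⟨u, hu, huF, hux⟩ := ih
          exact ⟨-u, neg_mem hu, by rw [neg_mul, huF], by rw [neg_mul, hux, neg_mul]⟩
    obtain ⟨u, h1, h2, h3⟩ := key _ (hε.mem g⁻¹)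
    exact ⟨u, h1, h2, by rwa [hceE] at h3⟩
  obtain ⟨u, humem, huF, hux⟩ := hu
  -- x * u = F
  have hxu : x * u = (F : A) := by
    have hs1 : x * u ∈ 𝒜.comp 1 := by
      have := 𝒜.mul_mem hxmem humem
      simpa using this
    have hsF : x * u * (F : A) ∈ 𝒜.compMul 1 (F : A) := ⟨x * u, hs1, rfl⟩
    have heq : (⟨x * u * (F : A), hsF⟩ : ↥(𝒜.compMul 1 (F : A))) = FF := by
      apply ψ.symm.injective
      apply Subtype.ext
      show (ψ.symm ⟨x * u * (F : A), hsF⟩ : A) = (ψ.symm FF : A)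
      have h1 : (⟨x * u * (F : A), hsF⟩ : ↥(𝒜.compMul 1 (F : A)))
          = (⟨x * u, hs1⟩ : ↥𝒜.base) • FF := rfl
      rw [h1, map_smul]
      show (x * u) * (ψ.symm FF : A) = (ψ.symm FF : A)
      rw [← hx', ← hxdef]
      calc x * u * x = x * (u * x) := by rw [mul_assoc]
        _ = x * (E : A) := by rw [hux]
        _ = x := hxE
    have := congrArg Subtype.val heq
    simp only [hFF] at this
    calc x * u = x * u * (F : A) := by rw [mul_assoc, huF]
      _ = (F : A) := this
  exact ⟨x, u, hxmem, hxE, humem, huF, hux, hxu⟩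

omit hε in
/-- From the data produced by `core`, right multiplication by `x` gives an
isomorphism `A_k F ≅ A_{kg} E`. -/
lemma mulNonempty (k g : G) (E F : ↥𝒜.base) {x u : A}
    (hx : x ∈ 𝒜.comp g) (hxE : x * E = x) (hu : u ∈ 𝒜.comp g⁻¹) (huF : u * F = u)
    (hux : u * x = (E : A)) (hxu : x * u = (F : A)) :
    Nonempty (↥(𝒜.compMul k (F : A)) ≃ₗ[↥𝒜.base] ↥(𝒜.compMul (k * g) (E : A))) := by
  have hFidemA : (F : A) * (F : A) = (F : A) := by
    calc (F : A) * (F : A) = x * u * (x * u) := by rw [hxu]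
      _ = x * (u * x) * u := by rw [mul_assoc, mul_assoc, mul_assoc]
      _ = x * (E : A) * u := by rw [hux]
      _ = x * u := by rw [hxE]
      _ = (F : A) := hxu
  have memk : ∀ m : A, m ∈ 𝒜.compMul k (F : A) → m ∈ 𝒜.comp k ∧ m * (F : A) = m := by
    rintro m ⟨a, ha, rfl⟩
    constructor
    · have := 𝒜.mul_mem ha (𝒜.base_coe_mem F)
      simpa using this
    · rw [mul_assoc, hFidemA]
  have maps : ∀ m : A, m ∈ 𝒜.compMul k (F : A) → m * x ∈ 𝒜.compMul (k * g) (E : A) := by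
    intro m hm
    refine ⟨m * x, 𝒜.mul_mem (memk m hm).1 hx, ?_⟩
    rw [mul_assoc, hxE]
  refine ⟨LinearEquiv.ofBijective
    { toFun := fun m => ⟨(m : A) * x, maps m m.2⟩
      map_add' := by intro m m'; apply Subtype.ext; exact add_mul _ _ _
      map_smul' := by
        intro r m; apply Subtype.ext
        show ((r : A) * (m : A)) * x = (r : A) * ((m : A) * x)
        rw [mul_assoc] } ⟨?_, ?_⟩⟩
  · -- injective
    intro m m' h
    have hval : (m : A) * x = (m' : A) * x := congrArg Subtype.val h
    apply Subtype.ext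
    calc (m : A) = (m : A) * (F : A) := (memk m m.2).2.symm
      _ = (m : A) * (x * u) := by rw [hxu]
      _ = (m : A) * x * u := by rw [mul_assoc]
      _ = (m' : A) * x * u := by rw [hval]
      _ = (m' : A) * (x * u) := by rw [mul_assoc]
      _ = (m' : A) * (F : A) := by rw [hxu]
      _ = (m' : A) := (memk m' m'.2).2
  · -- surjective
    rintro ⟨z, c, hc, rfl⟩
    have hcu : c * u ∈ 𝒜.compMul k (F : A) := by
      refine ⟨c * u, ?_, ?_⟩
      · have := 𝒜.mul_mem hc hu
        simpa using this
      · rw [mul_assoc, huF]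
    refine ⟨⟨c * u, hcu⟩, ?_⟩
    apply Subtype.ext
    show c * u * x = c * (E : A)
    rw [mul_assoc, hux]

/-- Inversion step: `A_g E ≅ R F` implies `A_{g⁻¹} F ≅ R E`. -/
lemma invStep (g : G) (E F : ↥𝒜.base) (hE : IsPrimitiveIdempotent E)
    (hFidem : IsIdempotentElem F) (hF0 : F ≠ 0)
    (h : Nonempty (↥(𝒜.compMul g (E : A)) ≃ₗ[↥𝒜.base] ↥(𝒜.compMul 1 (F : A)))) :
    Nonempty (↥(𝒜.compMul g⁻¹ (F : A)) ≃ₗ[↥𝒜.base] ↥(𝒜.compMul 1 (E : A))) := by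
  obtain ⟨ψ⟩ := h
  obtain ⟨x, u, hx, hxE, hu, huF, hux, hxu⟩ := core hε g E F hE hFidem hF0 ψ
  have := mulNonempty (𝒜 := 𝒜) g⁻¹ g E F hx hxE hu huF hux hxu
  rwa [inv_mul_cancel] at this

/-- Multiplication step: `A_g E ≅ R F` implies `A_{kg} E ≅ A_k F`. -/
lemma mulStep (k g : G) (E F : ↥𝒜.base) (hE : IsPrimitiveIdempotent E)
    (hFidem : IsIdempotentElem F) (hF0 : F ≠ 0)
    (h : Nonempty (↥(𝒜.compMul g (E : A)) ≃ₗ[↥𝒜.base] ↥(𝒜.compMul 1 (F : A)))) :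
    Nonempty (↥(𝒜.compMul k (F : A)) ≃ₗ[↥𝒜.base] ↥(𝒜.compMul (k * g) (E : A))) := by
  obtain ⟨ψ⟩ := h
  obtain ⟨x, u, hx, hxE, hu, huF, hux, hxu⟩ := core hε g E F hE hFidem hF0 ψ
  exact mulNonempty (𝒜 := 𝒜) k g E F hx hxE hu huF hux hxu

end RingGrading

end Auxiliary

/-- Let `A` be epsilon-strongly `G`-graded, `R = A₁`, and
`e₁, …, eₙ` pairwise orthogonal primitive idempotents of `R` with `Re_i ≇ Re_j`
for `i ≠ j`.  For every nonempty `X ⊆ {e₁, …, eₙ}`, the set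
`G_X = {g : ∀ e ∈ X, ∃ f ∈ X, A_g e ≅ Rf}` is a subgroup of `G`. -/
theorem GX_is_subgroup (𝒜 : RingGrading G A) (ε : G → A)
    (hε : IsEpsilonFamily 𝒜 ε) (n : ℕ) (e : Fin n → ↥𝒜.base)
    (horth : ∀ i j : Fin n, i ≠ j → e i * e j = 0)
    (hprim : ∀ i : Fin n, IsPrimitiveIdempotent (e i))
    (hnoniso : ∀ i j : Fin n, i ≠ j →
      ¬Nonempty (↥(𝒜.compMul 1 (e i : A)) ≃ₗ[↥𝒜.base] ↥(𝒜.compMul 1 (e j : A))))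
    (X : Set (Fin n)) (hX : X.Nonempty) :
    ∃ H : Subgroup G, ∀ g : G,
      g ∈ H ↔ ∀ i ∈ X, ∃ j ∈ X,
        Nonempty (↥(𝒜.compMul g (e i : A)) ≃ₗ[↥𝒜.base] ↥(𝒜.compMul 1 (e j : A))) := by
  classical
  refine ⟨{
    carrier := {g : G | ∀ i ∈ X, ∃ j ∈ X,
      Nonempty (↥(𝒜.compMul g (e i : A)) ≃ₗ[↥𝒜.base] ↥(𝒜.compMul 1 (e j : A)))}
    one_mem' := fun i hi => ⟨i, hi, ⟨LinearEquiv.refl _ _⟩⟩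
    mul_mem' := ?_
    inv_mem' := ?_ }, fun g => Iff.rfl⟩
  · -- multiplication
    intro g h hg hh i hi
    obtain ⟨j, hj, hψh⟩ := hh i hi
    obtain ⟨k, hk, hψg⟩ := hg j hj
    have hΦ := RingGrading.mulStep hε g h (e i) (e j) (hprim i) (hprim j).1
      (hprim j).2.1 hψh
    obtain ⟨Φ⟩ := hΦ
    obtain ⟨ψg⟩ := hψg
    exact ⟨k, hk, ⟨Φ.symm.trans ψg⟩⟩
  · -- inversion
    intro g hg
    set f : ↥X → ↥X := fun i => ⟨(hg i.1 i.2).choose, (hg i.1 i.2).choose_spec.1⟩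
      with hf
    have hfspec : ∀ i : ↥X, Nonempty (↥(𝒜.compMul g (e i.1 : A)) ≃ₗ[↥𝒜.base]
        ↥(𝒜.compMul 1 (e (f i).1 : A))) := fun i => (hg i.1 i.2).choose_spec.2
    have hinv : ∀ i : ↥X, Nonempty (↥(𝒜.compMul g⁻¹ (e (f i).1 : A)) ≃ₗ[↥𝒜.base]
        ↥(𝒜.compMul 1 (e i.1 : A))) := fun i =>
      RingGrading.invStep hε g (e i.1) (e (f i).1) (hprim i.1) (hprim (f i).1).1
        (hprim (f i).1).2.1 (hfspec i)
    have hfinj : Function.Injective f := by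
      intro i₁ i₂ hf12
      obtain ⟨η₁⟩ := hinv i₁
      obtain ⟨η₂⟩ := hinv i₂
      rw [hf12] at η₁
      by_contra hne
      have hne' : i₁.1 ≠ i₂.1 := fun hv => hne (Subtype.ext hv)
      exact hnoniso i₁.1 i₂.1 hne' ⟨η₁.symm.trans η₂⟩
    have hfsurj : Function.Surjective f := Finite.injective_iff_surjective.mp hfinj
    intro j hj
    obtain ⟨i, hfi⟩ := hfsurj ⟨j, hj⟩
    refine ⟨i.1, i.2, ?_⟩
    have := hinv i
    rw [hfi] at this
    exact this
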